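/- For all k ≥ 1, in the ring R: G_{k_a} − G_{(k−1)_d} = E_{k_a}, and E_{k_a} = a q^k (E_{(k−1)_b} + G_{(k−2)_d}). -/

import Mathlib

open Finset PowerSeries

namespace Primc

/-- Colours: `0 = a`, `1 = b`, `2 = c`, `3 = d`. -/
abbrev Colour := Fin 4

/-- A coloured part `k_z`: an underlying integer `k` together with its colour `z`. -/
abbrev CPart := ℕ × Colour

/-- The matrix `D` of minimal differences, with rows and columns indexed by the colours
`a, b, c, d` in this order. -/
def Dmat : Colour → Colour → ℕ := ![![2,1,2,2], ![1,0,1,1], ![0,1,0,2], ![0,1,0,2]]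

/-- The position of a coloured part in the total order
`1_a < 1_b < 1_c < 1_d < 2_a < 2_b < 2_c < 2_d < ⋯`. -/
def pos (p : CPart) : ℕ := 4 * p.1 + (p.2 : ℕ)

/-- A Primc partition: a finite sequence of coloured positive integers, non-increasing in the
above total order, in which consecutive parts `λ_i, λ_{i+1}` of colours `x, y` satisfy
`λ_i − λ_{i+1} ≥ D(x,y)`. -/
def IsPrimc (l : List CPart) : Prop :=
  (∀ p ∈ l, 1 ≤ p.1) ∧
  l.Chain' fun p r => pos r ≤ pos p ∧ r.1 + Dmat p.2 r.2 ≤ p.1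

/-- The weight of a coloured partition: the sum of the underlying integers of its parts. -/
def wt (l : List CPart) : ℕ := (l.map Prod.fst).sum

/-- The number of parts of colour `z`. -/
def nc (l : List CPart) (z : Colour) : ℕ := l.countP fun p => p.2 == z

/-- `R₀ = ℤ[a,c,d]`, with `a = X 0`, `c = X 1`, `d = X 2`. -/
abbrev R0 := MvPolynomial (Fin 3) ℤ

/-- `R = ℤ[a,c,d][[q]]`. -/
abbrev R := PowerSeries R0

/-- The variable `q`. -/
noncomputable def qq : R := PowerSeries.X

/-- The variable `a`. -/
noncomputable def av : R0 := MvPolynomial.X 0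

/-- The variable `c`. -/
noncomputable def cv : R0 := MvPolynomial.X 1

/-- The variable `d`. -/
noncomputable def dv : R0 := MvPolynomial.X 2

/-- The monomial `a^{#(a-parts)} c^{#(c-parts)} d^{#(d-parts)}` attached to a coloured
partition. -/
noncomputable def mono (l : List CPart) : R0 := av ^ nc l 0 * cv ^ nc l 2 * dv ^ nc l 3

/-- The infinite product `∏_{j ≥ 0} f j`, defined coefficientwise: the coefficient of `qⁿ` is
the corresponding coefficient of the partial product `∏_{j ≤ n} f j`.  This agrees with the
usual (coefficientwise convergent) infinite product whenever the factor `f j` is `≡ 1`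
modulo `q^{j+1}`, as is the case for all products appearing here. -/
noncomputable def iprod (f : ℕ → R) : R :=
  PowerSeries.mk fun n => PowerSeries.coeff n (∏ j ∈ Finset.range (n + 1), f j)

/-- The largest part of a Primc partition (its parts being written in non-increasing order),
with the convention that the empty partition has largest part `0_b`. -/
def top (l : List CPart) : CPart := l.headD (0, 1)

/-- `G_{k_x} ∈ R`: the sum of `q^{|λ|} a^{#(a-parts)} c^{#(c-parts)} d^{#(d-parts)}` over all
Primc partitions `λ` whose largest part is at most `k_x` in the colour order. -/
noncomputable def G (k : ℕ) (x : Colour) : R :=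
  PowerSeries.mk fun n =>
    ∑ᶠ lam : {l : List CPart // IsPrimc l ∧ wt l = n ∧ pos (top l) ≤ pos (k, x)}, mono lam.1

/-- `E_{k_x} ∈ R`: the sum of `q^{|λ|} a^{#(a-parts)} c^{#(c-parts)} d^{#(d-parts)}` over all
Primc partitions `λ` whose largest part is exactly `k_x` (so `E_{0_b} = 1`, the empty
partition having largest part `0_b` by convention). -/
noncomputable def E (k : ℕ) (x : Colour) : R :=
  PowerSeries.mk fun n =>
    ∑ᶠ lam : {l : List CPart // IsPrimc l ∧ wt l = n ∧ top l = (k, x)}, mono lam.1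

/-- `G_{k_d}` for an integer index `k ∈ ℤ`, with the convention `G_{k_d} = 0` for `k < 0`
(in particular `G_{(−1)_d} = 0`). -/
noncomputable def GdZ (k : ℤ) : R := if 0 ≤ k then G k.toNat 3 else 0

/-! Since `(k-1)_d` is the immediate predecessor of `k_a`, the first identity only splits off the
partitions with largest part exactly `k_a`. For the second, removing the largest part `k_a` is a
bijection onto the Primc partitions whose largest part may follow `k_a`, and by the first row of
`D` these are the partitions with largest part `(k-1)_b` or at most `(k-2)_d`. -/

lemma pos_injective : Function.Injective pos := by
  intro p r h
  have hp := p.2.isLt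
  have hr := r.2.isLt
  unfold pos at h
  exact Prod.ext (by omega) (Fin.ext (by omega))

def IsPrimcStep (p r : CPart) : Prop := pos r ≤ pos p ∧ r.1 + Dmat p.2 r.2 ≤ p.1

lemma isPrimc_iff {l : List CPart} :
    IsPrimc l ↔ (∀ p ∈ l, 1 ≤ p.1) ∧ l.IsChain IsPrimcStep :=
  Iff.rfl

lemma isPrimc_cons {p : CPart} {t : List CPart} :
    IsPrimc (p :: t) ↔ 1 ≤ p.1 ∧ (∀ r ∈ t.head?, IsPrimcStep p r) ∧ IsPrimc t := by
  simp only [isPrimc_iff, List.forall_mem_cons, List.isChain_cons]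
  tauto

lemma wt_cons (p : CPart) (t : List CPart) : wt (p :: t) = p.1 + wt t := by
  simp [wt]

lemma le_wt_of_mem {l : List CPart} {p : CPart} (hp : p ∈ l) : p.1 ≤ wt l :=
  List.single_le_sum (fun _ _ => Nat.zero_le _) _ (List.mem_map_of_mem hp)

lemma length_le_wt {l : List CPart} (h : ∀ p ∈ l, 1 ≤ p.1) : l.length ≤ wt l := by
  induction l with
  | nil => simp [wt]
  | cons p t ih =>
    rw [List.forall_mem_cons] at h
    rw [wt_cons, List.length_cons]
    have := ih h.2
    omega

lemma finite_setOf_isPrimc_wt_eq (n : ℕ) : {l | IsPrimc l ∧ wt l = n}.Finite := by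
  -- every part of a partition of `n` is at most `n`, so it lifts to `Fin (n + 1) × Colour`
  refine ((List.finite_length_le (Fin (n + 1) × Colour) n).image
    (List.map fun p => ((p.1 : ℕ), p.2))).subset ?_
  rintro l ⟨hl, rfl⟩
  refine ⟨l.map fun p => (⟨min p.1 (wt l), by omega⟩, p.2), by simpa using length_le_wt hl.1, ?_⟩
  rw [List.map_map]
  conv_rhs => rw [← List.map_id l]
  exact List.map_congr_left fun p hp => by simp [Nat.min_eq_left (le_wt_of_mem hp)]

lemma nc_cons (p : CPart) (t : List CPart) (z : Colour) : nc (p :: t) z = nc [p] z + nc t z := by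
  simp [nc, List.countP_cons, add_comm]

lemma mono_cons (p : CPart) (t : List CPart) : mono (p :: t) = mono [p] * mono t := by
  simp only [mono, nc_cons _ t, pow_add]
  ring

lemma mono_singleton_a (k : ℕ) : mono [(k, 0)] = av := by
  simp [mono, nc]

noncomputable def primcGF (P : List CPart → Prop) : R :=
  PowerSeries.mk fun n => ∑ᶠ l ∈ {l | IsPrimc l ∧ wt l = n ∧ P l}, mono l

lemma G_eq_primcGF (k : ℕ) (x : Colour) : G k x = primcGF fun l => pos (top l) ≤ pos (k, x) :=
  PowerSeries.ext fun _ => finsum_set_coe_eq_finsum_mem _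

lemma E_eq_primcGF (k : ℕ) (x : Colour) : E k x = primcGF fun l => top l = (k, x) :=
  PowerSeries.ext fun _ => finsum_set_coe_eq_finsum_mem _

lemma primcGF_congr {P Q : List CPart → Prop} (h : ∀ l, IsPrimc l → (P l ↔ Q l)) :
    primcGF P = primcGF Q := by
  refine PowerSeries.ext fun n => ?_
  have hPQ : {l | IsPrimc l ∧ wt l = n ∧ P l} = {l | IsPrimc l ∧ wt l = n ∧ Q l} :=
    Set.ext fun l => and_congr_right fun hl => and_congr_right fun _ => h l hl
  simp only [primcGF, coeff_mk, hPQ]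

lemma primcGF_eq_zero {P : List CPart → Prop} (h : ∀ l, IsPrimc l → ¬ P l) : primcGF P = 0 := by
  refine PowerSeries.ext fun n => ?_
  simp only [primcGF, coeff_mk, map_zero]
  convert finsum_mem_empty
  exact Set.eq_empty_of_forall_notMem fun l hl => h l hl.1 hl.2.2

lemma primcGF_or {P Q : List CPart → Prop} (h : ∀ l, IsPrimc l → P l → ¬ Q l) :
    primcGF (fun l => P l ∨ Q l) = primcGF P + primcGF Q := by
  refine PowerSeries.ext fun n => ?_
  simp only [primcGF, coeff_mk, map_add]
  have hfin (S : List CPart → Prop) : {l | IsPrimc l ∧ wt l = n ∧ S l}.Finite :=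
    (finite_setOf_isPrimc_wt_eq n).subset fun l hl => ⟨hl.1, hl.2.1⟩
  have hunion : {l | IsPrimc l ∧ wt l = n ∧ (P l ∨ Q l)} =
      {l | IsPrimc l ∧ wt l = n ∧ P l} ∪ {l | IsPrimc l ∧ wt l = n ∧ Q l} := by
    ext l
    simp only [Set.mem_union, Set.mem_ofPred_eq]
    tauto
  rw [hunion, finsum_mem_union (Set.disjoint_left.2 fun l hP hQ => h l hP.1 hP.2.2 hQ.2.2)
    (hfin P) (hfin Q)]

lemma top_eq_iff_exists_cons {p : CPart} (hp : 1 ≤ p.1) {l : List CPart} :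
    top l = p ↔ ∃ t, p :: t = l := by
  cases l with
  | nil => exact iff_of_false (fun h => by simp [← h, top] at hp) (by simp)
  | cons r t => simp [top, eq_comm]

lemma primcGF_top_eq {p : CPart} (hp : 1 ≤ p.1) :
    primcGF (fun l => top l = p) =
      PowerSeries.C (mono [p]) * PowerSeries.X ^ p.1 *
        primcGF (fun t => ∀ r ∈ t.head?, IsPrimcStep p r) := by
  refine PowerSeries.ext fun n => ?_
  rw [mul_assoc, coeff_C_mul, coeff_X_pow_mul']
  simp only [primcGF, coeff_mk, top_eq_iff_exists_cons hp]
  split_ifs with hn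
  · have himage : {l | IsPrimc l ∧ wt l = n ∧ ∃ t, p :: t = l} =
        List.cons p '' {t | IsPrimc t ∧ wt t = n - p.1 ∧ ∀ r ∈ t.head?, IsPrimcStep p r} := by
      ext l
      simp only [Set.mem_ofPred_eq, Set.mem_image]
      constructor
      · rintro ⟨hl, hw, t, rfl⟩
        rw [isPrimc_cons] at hl
        rw [wt_cons] at hw
        exact ⟨t, ⟨hl.2.2, by omega, hl.2.1⟩, rfl⟩
      · rintro ⟨t, ⟨ht, hw, hstep⟩, rfl⟩
        exact ⟨isPrimc_cons.2 ⟨hp, hstep, ht⟩, by rw [wt_cons]; omega, t, rfl⟩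
    rw [himage, finsum_mem_image List.cons_injective.injOn, mul_finsum_mem]
    exact finsum_mem_congr rfl fun t _ => mono_cons p t
  · rw [mul_zero]
    convert finsum_mem_empty
    refine Set.eq_empty_of_forall_notMem ?_
    rintro l ⟨-, hw, t, rfl⟩
    rw [wt_cons] at hw
    omega

lemma isPrimcStep_a_iff {k : ℕ} (hk : 1 ≤ k) {r : CPart} (hr : 1 ≤ r.1) :
    IsPrimcStep (k, 0) r ↔ r = (k - 1, 1) ∨ pos r + 5 ≤ 4 * k := by
  obtain ⟨n, z⟩ := r
  fin_cases z <;> simp [IsPrimcStep, Dmat, pos] at hr ⊢ <;> omega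

lemma head_isPrimcStep_a_iff {k : ℕ} (hk : 1 ≤ k) {t : List CPart} (ht : IsPrimc t) :
    (∀ r ∈ t.head?, IsPrimcStep (k, 0) r) ↔ top t = (k - 1, 1) ∨ pos (top t) + 5 ≤ 4 * k := by
  cases t with
  | nil =>
    have hpos : pos (top []) = 1 := rfl
    rw [hpos]
    refine iff_of_true (fun r hr => by simp at hr) ?_
    rcases hk.eq_or_lt with rfl | hk2
    · exact Or.inl rfl
    · exact Or.inr (by omega)
  | cons r t =>
    simp only [List.head?_cons, Option.mem_some_iff, forall_eq', top, List.headD_cons]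
    exact isPrimcStep_a_iff hk (isPrimc_cons.1 ht).1

lemma G_a_eq_E_add_G_d {k : ℕ} (hk : 1 ≤ k) : G k 0 = E k 0 + G (k - 1) 3 := by
  rw [G_eq_primcGF, E_eq_primcGF, G_eq_primcGF, ← primcGF_or]
  · refine primcGF_congr fun l _ => ?_
    have := (top l).2.isLt
    constructor
    · intro h
      by_cases heq : pos (top l) = pos (k, 0)
      · exact Or.inl (pos_injective heq)
      · right
        simp only [pos] at h heq ⊢
        omega
    · rintro (h | h)
      · rw [h]
      · simp only [pos] at h ⊢
        omega
  · intro l _ h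
    rw [h]
    show ¬ 4 * k + 0 ≤ 4 * (k - 1) + 3
    omega

lemma GdZ_sub_two_eq_primcGF {k : ℕ} (hk : 1 ≤ k) :
    GdZ ((k : ℤ) - 2) = primcGF fun l => pos (top l) + 5 ≤ 4 * k := by
  unfold GdZ
  split_ifs with h
  · rw [G_eq_primcGF]
    refine primcGF_congr fun l _ => ?_
    simp only [pos]
    omega
  · exact (primcGF_eq_zero fun l _ => by omega).symm

/-- Equation (2.1d): for all `k ≥ 1`, `G_{k_a} − G_{(k−1)_d} = E_{k_a}` and
`E_{k_a} = a q^k (E_{(k−1)_b} + G_{(k−2)_d})` in `R`. -/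
theorem statement11 (k : ℕ) (hk : 1 ≤ k) :
    G k 0 - G (k - 1) 3 = E k 0 ∧
    E k 0 = PowerSeries.C av * qq ^ k * (E (k - 1) 1 + GdZ ((k : ℤ) - 2)) := by
  refine ⟨by rw [G_a_eq_E_add_G_d hk, add_sub_cancel_right], ?_⟩
  have hdisj : ∀ l, IsPrimc l → top l = (k - 1, 1) → ¬ pos (top l) + 5 ≤ 4 * k := by
    intro l _ h
    simp only [h, pos]
    omega
  rw [E_eq_primcGF, primcGF_top_eq hk, mono_singleton_a,
    primcGF_congr fun t ht => head_isPrimcStep_a_iff hk ht, primcGF_or hdisj,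
    ← E_eq_primcGF, GdZ_sub_two_eq_primcGF hk, qq]

end Primc
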